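/- arXiv:1011.0554 — 3 statements merged into one kernel-verified Lean document; each statement's English description precedes it below -/
import Mathlib

section
/- For n = 2(k+1) with k ≥ 0 and any j with 0 ≤ j ≤ n/2, the submodule of ℤ^{n-1} generated by the vectors {η_0, ..., η_{n/2}} \ {η_j} (omitting η_j) is a direct summand of ℤ^{n-1} of rank n/2. -/
/-- The characteristic vectors `η_j ∈ ℤ^{n-1}` (coordinates indexed by `Fin (n-1)`,
where index `i` corresponds to the standard basis vector `e_{i+1}`):
`η_j = e_{j+1}` for `0 ≤ j < n/2 - 1`, `η_{n/2-1} = e_1 + ⋯ + e_{n/2}`,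
`η_j = e_j` for `n/2 ≤ j < n`, and `η_n = e_{n/2} + ⋯ + e_{n-1}`. -/
def eta (n j : ℕ) : Fin (n - 1) → ℤ := fun i =>
  if j < n / 2 - 1 then (if i.val = j then 1 else 0)
  else if j = n / 2 - 1 then (if i.val < n / 2 then 1 else 0)
  else if j < n then (if i.val + 1 = j then 1 else 0)
  else (if n / 2 ≤ i.val + 1 then 1 else 0)

/-!
For `n = 2(k+1)` the vectors `η_0, …, η_{k-1}, η_{k+1}` are the unit vectors `e_1, …, e_{k+1}`
and `η_k` is their sum. Hence `η_0, …, η_{k+1}` span the coordinate summand `ℤ^{k+1}` of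
`ℤ^{n-1}` and satisfy a linear relation whose coefficients are all `±1`, so omitting any one
of them does not change the span.
-/

open Finset

namespace Submodule

theorem span_image_diff_singleton_of_sum_smul_eq_zero {R M ι : Type*} [Ring R]
    [AddCommGroup M] [Module R M] [DecidableEq ι] {v : ι → M} {c : ι → R} {s : Finset ι}
    (hrel : ∑ i ∈ s, c i • v i = 0) {j : ι} (hj : IsUnit (c j)) :
    span R (v '' (↑s \ {j})) = span R (v '' s) := by
  by_cases hjs : j ∈ s
  · have hmem : c j • v j ∈ span R (v '' (↑s \ {j})) := by
      rw [← Finset.add_sum_erase s _ hjs, add_eq_zero_iff_eq_neg] at hrel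
      rw [hrel]
      refine neg_mem (sum_mem fun i hi => smul_mem _ _ (subset_span ⟨i, ?_, rfl⟩))
      simpa [and_comm] using hi
    rw [← span_insert_eq_span ((smul_mem_iff_of_isUnit _ hj).1 hmem), ← Set.image_insert_eq,
      Set.insert_sdiff_singleton, Set.insert_eq_of_mem hjs]
  · rw [Set.sdiff_singleton_eq_self (by simpa using hjs)]

end Submodule

theorem Module.Basis.finrank_span_image {R M ι : Type*} [Ring R] [Nontrivial R]
    [StrongRankCondition R] [AddCommGroup M] [Module R M] (b : Basis ι R M) (s : Set ι)
    [Fintype s] :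
    Module.finrank R (Submodule.span R (b '' s)) = Fintype.card s := by
  rw [Set.image_eq_range]
  exact finrank_span_eq_card (b.linearIndependent.comp _ Subtype.val_injective)

section
variable {k : ℕ}

theorem eta_of_lt {i : ℕ} (hi : i < k) : eta (2 * (k + 1)) i = Pi.single ⟨i, by omega⟩ 1 := by
  funext x
  simp only [eta, Pi.single_apply, Fin.ext_iff]
  split_ifs <;> omega

theorem eta_half (k : ℕ) : eta (2 * (k + 1)) (k + 1) = Pi.single ⟨k, by omega⟩ 1 := by
  funext x
  simp only [eta, Pi.single_apply, Fin.ext_iff]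
  split_ifs <;> omega

theorem eta_apply_eq_zero_of_lt {i : ℕ} (hi : i ≤ k + 1) {x : Fin (2 * (k + 1) - 1)}
    (hx : k < x.val) :
    eta (2 * (k + 1)) i x = 0 := by
  simp only [eta]
  split_ifs <;> omega

theorem sum_smul_eta_eq_zero (k : ℕ) :
    ∑ i ∈ range (k + 2), (if i = k then -1 else 1 : ℤ) • eta (2 * (k + 1)) i = 0 := by
  funext x
  have hlt : ∀ i ∈ range k, (if i = k then -1 else 1 : ℤ) * eta (2 * (k + 1)) i x
      = if (x : ℕ) = i then 1 else 0 := fun i hi => by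
    rw [if_neg (mem_range.1 hi).ne, one_mul, eta_of_lt (mem_range.1 hi)]
    simp only [Pi.single_apply, Fin.ext_iff]
  rw [sum_range_succ, sum_range_succ]
  simp only [Pi.add_apply, Finset.sum_apply, Pi.smul_apply, smul_eq_mul, Pi.zero_apply]
  rw [sum_congr rfl hlt, sum_ite_eq, eta_half]
  simp only [eta, Pi.single_apply, Fin.ext_iff, mem_range]
  split_ifs <;> omega

theorem span_eta_image_range :
    Submodule.span ℤ (eta (2 * (k + 1)) '' range (k + 2)) =
      Submodule.span ℤ (Pi.basisFun ℤ _ '' Set.Iic ⟨k, by omega⟩) := by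
  apply le_antisymm
  · refine Submodule.span_le.2 ?_
    rintro _ ⟨i, hi, rfl⟩
    rw [SetLike.mem_coe, Module.Basis.mem_span_image]
    intro x hx
    by_contra hxk
    simp only [Finset.mem_coe, Finsupp.mem_support_iff, Pi.basisFun_repr] at hx
    exact hx (eta_apply_eq_zero_of_lt (by simpa [Nat.lt_succ_iff] using hi) (not_le.1 hxk))
  · refine Submodule.span_mono ?_
    rintro _ ⟨x, hx, rfl⟩
    replace hx : x.val ≤ k := hx
    rcases hx.lt_or_eq with hlt | heq
    · refine ⟨x, by simp only [coe_range, Set.mem_Iio]; omega, ?_⟩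
      rw [eta_of_lt hlt, Pi.basisFun_apply]
    · refine ⟨k + 1, by simp, ?_⟩
      rw [eta_half, Pi.basisFun_apply, Fin.eq_mk_iff_val_eq.2 heq]

end

theorem eta_first_half_omit_one_direct_summand_general (k n : ℕ) (hn : n = 2 * (k + 1))
    (j : ℕ) :
    (∃ N' : Submodule ℤ (Fin (n - 1) → ℤ),
        IsCompl (Submodule.span ℤ (eta n '' {i | i ≤ n / 2 ∧ i ≠ j})) N') ∧
      Module.finrank ℤ (Submodule.span ℤ (eta n '' {i | i ≤ n / 2 ∧ i ≠ j})) = n / 2 := by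
  subst hn
  have hhalf : 2 * (k + 1) / 2 = k + 1 := by omega
  have hs : {i | i ≤ 2 * (k + 1) / 2 ∧ i ≠ j} = ↑(range (k + 2)) \ {j} := by
    ext i
    simp only [Set.mem_ofPred_eq, Set.mem_sdiff, coe_range, Set.mem_Iio, Set.mem_singleton_iff]
    omega
  have hunit : IsUnit (if j = k then -1 else 1 : ℤ) := by split_ifs <;> simp
  rw [hs, Submodule.span_image_diff_singleton_of_sum_smul_eq_zero (sum_smul_eta_eq_zero k) hunit,
    span_eta_image_range, hhalf]
  set b := Pi.basisFun ℤ (Fin (2 * (k + 1) - 1))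
  refine ⟨⟨_, b.linearIndependent.isCompl_span_image b.span_eq isCompl_compl⟩, ?_⟩
  rw [b.finrank_span_image, Fintype.card_Iic, Fin.card_Iic]

theorem eta_first_half_omit_one_direct_summand (k n : ℕ) (hn : n = 2 * (k + 1))
    (j : ℕ) (hj : j ≤ n / 2) :
    (∃ N' : Submodule ℤ (Fin (n - 1) → ℤ),
        IsCompl (Submodule.span ℤ (eta n '' {i | i ≤ n / 2 ∧ i ≠ j})) N') ∧
      Module.finrank ℤ (Submodule.span ℤ (eta n '' {i | i ≤ n / 2 ∧ i ≠ j})) = n / 2 :=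
  eta_first_half_omit_one_direct_summand_general k n hn j
end

section
/- For n = 2(k+1) with k ≥ 0 and any l with n/2 ≤ l ≤ n, the submodule of ℤ^{n-1} generated by the vectors {η_{n/2}, ..., η_n} \ {η_l} (omitting η_l) is a direct summand of ℤ^{n-1} of rank n/2. -/
/-!
For `n/2 ≤ j < n` the vector `η_j` is the standard basis vector `e_j`, and `η_n` is the sum of
these. Omitting one `η_l` therefore does not shrink the span: if `l < n` then
`e_l = η_n - ∑_{j ≠ l} e_j`. So the span is the coordinate subspace on `e_{n/2}, …, e_{n-1}`,
which is complemented by the coordinate subspace on the remaining basis vectors and has rank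
`n/2`.
-/

theorem Submodule.mem_of_sum_mem_of_forall_ne {R M ι : Type*} [Ring R] [AddCommGroup M]
    [Module R M] {p : Submodule R M} {s : Finset ι} {x : ι → M} {a : ι} (ha : a ∈ s)
    (hsum : ∑ i ∈ s, x i ∈ p) (hx : ∀ i ∈ s, i ≠ a → x i ∈ p) : x a ∈ p := by
  classical
  rw [← Finset.add_sum_erase s x ha] at hsum
  simpa using p.sub_mem hsum
    (p.sum_mem fun i hi => hx i (Finset.mem_of_mem_erase hi) (Finset.ne_of_mem_erase hi))

theorem Pi.isCompl_spanSubset_compl (R : Type*) {η : Type*} [Semiring R] [Finite η]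
    (s : Set η) : IsCompl (Pi.spanSubset R s) (Pi.spanSubset R sᶜ) :=
  (Pi.basisFun R η).linearIndependent.isCompl_span_image (Pi.basisFun R η).span_eq
    isCompl_compl

theorem Fin.ncard_setOf_le_val (m k : ℕ) : {i : Fin m | k ≤ i.val}.ncard = m - k := by
  have himage : Fin.val '' {i : Fin m | k ≤ i.val} = Finset.Ico k m := by
    ext x
    simp only [Set.mem_image, Set.mem_ofPred_eq, Finset.coe_Ico, Set.mem_Ico]
    exact ⟨fun ⟨i, hi, hx⟩ => hx ▸ ⟨hi, i.isLt⟩,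
      fun hx => ⟨⟨x, hx.2⟩, hx.1, rfl⟩⟩
  rw [← Set.ncard_image_of_injective _ Fin.val_injective, himage, Set.ncard_coe_finset,
    Nat.card_Ico]

section eta

variable {n : ℕ}

theorem eta_apply_eq_zero {j : ℕ} (hn : 0 < n / 2) (hj : n / 2 ≤ j) {i : Fin (n - 1)}
    (hi : ¬n / 2 - 1 ≤ i.val) : eta n j i = 0 := by
  unfold eta
  split_ifs <;> omega

theorem eta_succ (hn : 0 < n / 2) {i : Fin (n - 1)} (hi : n / 2 - 1 ≤ i.val) :
    eta n (i.val + 1) = Pi.single i 1 := by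
  funext i'
  simp only [eta, Pi.single_apply, Fin.ext_iff]
  split_ifs <;> omega

theorem eta_self (hn : 0 < n) :
    eta n n = ∑ i with n / 2 - 1 ≤ i.val, Pi.single i 1 := by
  funext i'
  simp only [eta, Finset.sum_apply, Pi.single_apply, Finset.sum_ite_eq, Finset.mem_filter,
    Finset.mem_univ, true_and]
  split_ifs <;> omega

theorem span_eta_second_half_eq_spanSubset (hn : 2 ≤ n) (l : ℕ) :
    Submodule.span ℤ (eta n '' {i | n / 2 ≤ i ∧ i ≤ n ∧ i ≠ l}) =
      Pi.spanSubset ℤ {i : Fin (n - 1) | n / 2 - 1 ≤ i.val} := by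
  have hn2 : 0 < n / 2 := by omega
  set V := Submodule.span ℤ (eta n '' {i | n / 2 ≤ i ∧ i ≤ n ∧ i ≠ l})
  apply le_antisymm
  · rw [Submodule.span_le]
    rintro _ ⟨j, ⟨hj, -, -⟩, rfl⟩
    exact Pi.mem_spanSubset_iff.mpr fun i hi => eta_apply_eq_zero hn2 hj hi
  · rw [Pi.spanSubset, Submodule.span_le]
    rintro _ ⟨i, hi, rfl⟩
    have hsingle_mem (i' : Fin (n - 1)) (hi' : n / 2 - 1 ≤ i'.val) (hl : i'.val + 1 ≠ l) :
        Pi.single i' 1 ∈ V :=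
      eta_succ hn2 hi' ▸ Submodule.subset_span ⟨_, ⟨by omega, by omega, hl⟩, rfl⟩
    rw [Pi.basisFun_apply]
    by_cases hl : i.val + 1 = l
    · refine Submodule.mem_of_sum_mem_of_forall_ne
        (s := {i : Fin (n - 1) | n / 2 - 1 ≤ i.val}) (by simpa using hi) ?_
        fun i' hi' hne => hsingle_mem i' (by simpa using hi') ?_
      · rw [← eta_self (by omega)]
        exact Submodule.subset_span ⟨n, ⟨by omega, le_rfl, by omega⟩, rfl⟩
      · rw [← hl]
        exact fun h => hne (Fin.ext (by omega))
    · exact hsingle_mem i hi hl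

end eta

theorem eta_second_half_omit_one_direct_summand_general (k n : ℕ) (hn : n = 2 * (k + 1))
    (l : ℕ) :
    (∃ N' : Submodule ℤ (Fin (n - 1) → ℤ),
        IsCompl (Submodule.span ℤ (eta n '' {i | n / 2 ≤ i ∧ i ≤ n ∧ i ≠ l})) N') ∧
      Module.finrank ℤ
        (Submodule.span ℤ (eta n '' {i | n / 2 ≤ i ∧ i ≤ n ∧ i ≠ l})) = n / 2 := by
  rw [span_eta_second_half_eq_spanSubset (by omega) l]
  refine ⟨⟨_, Pi.isCompl_spanSubset_compl ℤ _⟩, ?_⟩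
  rw [Pi.dim_spanSubset, Fin.ncard_setOf_le_val]
  omega

theorem eta_second_half_omit_one_direct_summand (k n : ℕ) (hn : n = 2 * (k + 1))
    (l : ℕ) (hl : n / 2 ≤ l) (hl' : l ≤ n) :
    (∃ N' : Submodule ℤ (Fin (n - 1) → ℤ),
        IsCompl (Submodule.span ℤ (eta n '' {i | n / 2 ≤ i ∧ i ≤ n ∧ i ≠ l})) N') ∧
      Module.finrank ℤ
        (Submodule.span ℤ (eta n '' {i | n / 2 ≤ i ∧ i ≤ n ∧ i ≠ l})) = n / 2 :=
  eta_second_half_omit_one_direct_summand_general k n hn l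
end

section
/- The permutation ρ of {0, 1, ..., n} (defined by ρ(j) = n-1-j for 0 ≤ j < n/2-1 and n/2 < j < n, ρ(n/2-1) = n, ρ(n/2) = n/2, ρ(n) = n/2-1) is an even permutation if n ≡ 0 (mod 4) and an odd permutation if n ≡ 2 (mod 4). -/
/-!
Following `ρ` by a 3-cycle on `{n/2 - 1, n/2, n}` and then by the rotation `i ↦ i + 1` of
`ℤ/(n+1)` gives the reversal `i ↦ n - i`. For even `n` both the 3-cycle and the `(n+1)`-cycle are
even, so `ρ` has the sign of the reversal of `{0, …, n}`. The reversal of `{0, …, k-1}` has sign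
`(-1) ^ (k / 2)` by induction on `k`: rotating the reversal of `{0, …, k}` by one step fixes `0`
and reverses `{1, …, k}`, and the rotation has sign `(-1) ^ k`.
-/

/-- The permutation `ρ` of `{0, 1, …, n}`:
`ρ(j) = n - 1 - j` if `0 ≤ j < n/2 - 1` or `n/2 < j < n`,
`ρ(n/2 - 1) = n`, `ρ(n/2) = n/2`, and `ρ(n) = n/2 - 1`. -/
def rho (n j : ℕ) : ℕ :=
  if j = n / 2 - 1 then n
  else if j = n / 2 then n / 2
  else if j = n then n / 2 - 1
  else n - 1 - j

open Equiv Equiv.Perm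

theorem Fin.finRotate_mul_revPerm (n : ℕ) :
    finRotate (n + 1) * Fin.revPerm = decomposeFin.symm (0, Fin.revPerm) := by
  ext i
  refine Fin.cases ?_ (fun i => ?_) i
  · simp
  · simp [Fin.rev_succ]

theorem Fin.sign_revPerm (n : ℕ) : sign (Fin.revPerm : Perm (Fin n)) = (-1) ^ (n / 2) := by
  induction n with
  | zero => rfl
  | succ n ih =>
    have h := congrArg sign (Fin.finRotate_mul_revPerm n)
    rw [Perm.sign_mul, decomposeFin.symm_sign, ih, sign_finRotate, if_pos rfl, one_mul,
      Nat.succ_sub_one] at h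
    rw [eq_inv_mul_of_mul_eq h, ← inv_pow, inv_neg_one, ← pow_add,
      Int.units_pow_eq_pow_mod_two, Int.units_pow_eq_pow_mod_two _ ((n + 1) / 2)]
    congr 1
    rcases Nat.even_or_odd' n with ⟨k, rfl | rfl⟩ <;> omega

theorem Fin.val_finRotate_succ {n : ℕ} (i : Fin (n + 1)) :
    (finRotate (n + 1) i).val = if i.val = n then 0 else i.val + 1 := by
  rw [coe_finRotate]
  split_ifs <;> simp_all [Fin.ext_iff]

theorem Fin.val_swap_apply {n : ℕ} (a b i : Fin n) :
    (swap a b i).val = if i.val = a.val then b.val else if i.val = b.val then a.val else i.val := by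
  simp only [swap_apply_def, Fin.ext_iff]
  split_ifs <;> rfl

theorem finRotate_mul_swap_mul_swap_mul_eq_revPerm_of_rho {n : ℕ} (hn : 2 ≤ n) (hne : Even n)
    {σ : Perm (Fin (n + 1))} (hσ : ∀ j : Fin (n + 1), (σ j).val = rho n j.val) :
    finRotate (n + 1) * swap ⟨n / 2, by omega⟩ (Fin.last n) *
      swap ⟨n / 2 - 1, by omega⟩ ⟨n / 2, by omega⟩ * σ = Fin.revPerm := by
  obtain ⟨m, rfl⟩ := hne
  ext j
  simp only [Perm.mul_apply, Fin.val_finRotate_succ, Fin.val_swap_apply, hσ, rho, Fin.val_last,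
    Fin.revPerm_apply, Fin.val_rev, show (m + m) / 2 = m by omega]
  split_ifs <;> omega

theorem sign_eq_neg_one_pow_of_rho {n : ℕ} (hn : 2 ≤ n) (hne : Even n)
    {σ : Perm (Fin (n + 1))} (hσ : ∀ j : Fin (n + 1), (σ j).val = rho n j.val) :
    sign σ = (-1) ^ (n / 2) := by
  have h := congrArg sign (finRotate_mul_swap_mul_swap_mul_eq_revPerm_of_rho hn hne hσ)
  rw [Perm.sign_mul, Perm.sign_mul, Perm.sign_mul, sign_finRotate, Nat.add_sub_cancel,
    hne.neg_one_pow, sign_swap (by simp [Fin.ext_iff]; omega),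
    sign_swap (by simp [Fin.ext_iff]; omega), Fin.sign_revPerm] at h
  obtain ⟨m, rfl⟩ := hne
  rw [show (m + m + 1) / 2 = (m + m) / 2 by omega] at h
  simpa using h

theorem rho_sign (n : ℕ) (hn2 : 2 ≤ n) (hne : Even n) (σ : Equiv.Perm (Fin (n + 1)))
    (hσ : ∀ j : Fin (n + 1), (σ j).val = rho n j.val) :
    (n % 4 = 0 → Equiv.Perm.sign σ = 1) ∧ (n % 4 = 2 → Equiv.Perm.sign σ = -1) := by
  rw [sign_eq_neg_one_pow_of_rho hn2 hne hσ]
  refine ⟨fun h4 => Even.neg_one_pow ?_, fun h4 => Odd.neg_one_pow ?_⟩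
  · rw [Nat.even_iff]; omega
  · rw [Nat.odd_iff]; omega
end
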